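/- arXiv:2308.15720 — 3 statements merged into one kernel-verified Lean document; each statement's English description precedes it below -/
import Mathlib

section
/- Let A be a real m×n matrix whose column space has dimension k, let U be a real m×k matrix with orthonormal columns (UᵀU = I_k) whose columns span the column space of A, let S be a real d×m matrix with rank(SA) = k, and let M be a real n×k matrix such that SAM has orthonormal columns ((SAM)ᵀ(SAM) = I_k). Then SU has rank k (so (SU)ᵀ(SU) is invertible), and, writing P = ((SU)ᵀ(SU))⁻¹(SU)ᵀ for the Moore–Penrose pseudoinverse of SU, the multiset of eigenvalues of the k×k symmetric matrix (AM)ᵀ(AM) equals the multiset of eigenvalues of the k×k symmetric matrix PPᵀ; equivalently, the singular values of AM (with multiplicity) coincide with the singular values of (SU)†. -/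
/-!
Since the columns of `U` are an orthonormal basis of the column space of `A`, we have
`A = U B` with `B = Uᵀ A`, so `S A = (S U) B` and `S U` has full column rank `k`.
With `X = B M` and `T = (S U)ᵀ (S U)` the hypothesis on `M` reads `Xᵀ T X = 1`; as all
three matrices are square, this gives `T⁻¹ = X Xᵀ`. On the other side `(A M)ᵀ (A M) = Xᵀ X`
and the pseudoinverse `P` of `S U` satisfies `P Pᵀ = T⁻¹ = X Xᵀ`; finally `Xᵀ X` and `X Xᵀ`
have the same characteristic polynomial.
-/

open Matrix

namespace Matrix

variable {R : Type*} [CommRing R] {l m n : Type*} [Fintype l] [Fintype m]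

theorem mul_transpose_mul_eq_self_of_range_le [Fintype n] [DecidableEq m] [DecidableEq n]
    {U : Matrix l m R} {A : Matrix l n R} (hU : Uᵀ * U = 1)
    (hAU : LinearMap.range A.mulVecLin ≤ LinearMap.range U.mulVecLin) :
    U * (Uᵀ * A) = A := by
  refine ext_of_mulVec_single fun j => ?_
  obtain ⟨y, hy⟩ := hAU (LinearMap.mem_range_self A.mulVecLin (Pi.single j 1))
  change U *ᵥ y = A *ᵥ Pi.single j 1 at hy
  rw [← mulVec_mulVec, ← mulVec_mulVec, ← hy, mulVec_mulVec (M := Uᵀ), hU, one_mulVec]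

theorem transpose_mul_self_mul_of_transpose_mul_self_eq_one [DecidableEq m] {U : Matrix l m R}
    (hU : Uᵀ * U = 1) (B : Matrix m n R) : (U * B)ᵀ * (U * B) = Bᵀ * B := by
  rw [transpose_mul, Matrix.mul_assoc, ← Matrix.mul_assoc Uᵀ, hU, Matrix.one_mul]

theorem pinv_mul_pinv_transpose [Fintype n] [DecidableEq n] {G : Matrix m n R}
    (hG : IsUnit (Gᵀ * G)) :
    ((Gᵀ * G)⁻¹ * Gᵀ) * ((Gᵀ * G)⁻¹ * Gᵀ)ᵀ = (Gᵀ * G)⁻¹ := by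
  have hGram : (Gᵀ * G)ᵀ = Gᵀ * G := by rw [transpose_mul, transpose_transpose]
  rw [transpose_mul, transpose_transpose, transpose_nonsing_inv, hGram, Matrix.mul_assoc,
    ← Matrix.mul_assoc Gᵀ, mul_nonsing_inv _ ((isUnit_iff_isUnit_det _).mp hG), Matrix.mul_one]

end Matrix

theorem spectrum_of_preconditioned_matrix_general {m n d k : ℕ}
    (A : Matrix (Fin m) (Fin n) ℝ)
    (U : Matrix (Fin m) (Fin k) ℝ) (hU : Uᵀ * U = 1)
    (hspan : LinearMap.range A.mulVecLin = LinearMap.range U.mulVecLin)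
    (S : Matrix (Fin d) (Fin m) ℝ) (hSA : (S * A).rank = k)
    (M : Matrix (Fin n) (Fin k) ℝ) (hM : (S * A * M)ᵀ * (S * A * M) = 1) :
    (S * U).rank = k ∧ IsUnit ((S * U)ᵀ * (S * U)) ∧
      ((A * M)ᵀ * (A * M)).charpoly =
        ((((S * U)ᵀ * (S * U))⁻¹ * (S * U)ᵀ) *
          (((S * U)ᵀ * (S * U))⁻¹ * (S * U)ᵀ)ᵀ).charpoly := by
  have hA : U * (Uᵀ * A) = A := mul_transpose_mul_eq_self_of_range_le hU hspan.le
  set X := Uᵀ * A * M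
  have hSA' : S * A = S * U * (Uᵀ * A) := by rw [Matrix.mul_assoc, hA]
  have hrank : (S * U).rank = k := by
    refine le_antisymm (rank_le_width _) ?_
    calc k = (S * U * (Uᵀ * A)).rank := by rw [← hSA', hSA]
      _ ≤ (S * U).rank := rank_mul_le_left _ _
  have hAM : A * M = U * X := by rw [← Matrix.mul_assoc, hA]
  have hSAM : S * A * M = S * U * X := by rw [hSA', Matrix.mul_assoc, Matrix.mul_assoc]
  have hTX : (S * U)ᵀ * (S * U) * (X * Xᵀ) = 1 := by
    rw [← Matrix.mul_assoc, mul_eq_one_comm, ← hM, hSAM]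
    simp only [transpose_mul, Matrix.mul_assoc]
  have hT : IsUnit ((S * U)ᵀ * (S * U)) := IsUnit.of_mul_eq_one _ hTX
  refine ⟨hrank, hT, ?_⟩
  rw [pinv_mul_pinv_transpose hT, inv_eq_right_inv hTX, hAM,
    transpose_mul_self_mul_of_transpose_mul_self_eq_one hU, charpoly_mul_comm]

/-- Proposition 3.1: if `U` has orthonormal columns spanning the column space of `A`,
`rank (S * A) = k`, and `M` orthogonalizes `S * A`, then `S * U` has full column rank and
the spectrum of `(A * M)ᵀ * (A * M)` equals that of `P * Pᵀ` where
`P = ((S * U)ᵀ * (S * U))⁻¹ * (S * U)ᵀ` is the Moore–Penrose pseudoinverse of `S * U`;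
the equality of eigenvalue multisets is expressed via equality of characteristic polynomials. -/
theorem spectrum_of_preconditioned_matrix {m n d k : ℕ}
    (A : Matrix (Fin m) (Fin n) ℝ) (hA : A.rank = k)
    (U : Matrix (Fin m) (Fin k) ℝ) (hU : Uᵀ * U = 1)
    (hspan : LinearMap.range A.mulVecLin = LinearMap.range U.mulVecLin)
    (S : Matrix (Fin d) (Fin m) ℝ) (hSA : (S * A).rank = k)
    (M : Matrix (Fin n) (Fin k) ℝ) (hM : (S * A * M)ᵀ * (S * A * M) = 1) :
    (S * U).rank = k ∧ IsUnit ((S * U)ᵀ * (S * U)) ∧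
      ((A * M)ᵀ * (A * M)).charpoly =
        ((((S * U)ᵀ * (S * U))⁻¹ * (S * U)ᵀ) *
          (((S * U)ᵀ * (S * U))⁻¹ * (S * U)ᵀ)ᵀ).charpoly :=
  spectrum_of_preconditioned_matrix_general A U hU hspan S hSA M hM
end

section
/- Let A be a real m×n matrix whose column space has dimension k, let U be a real m×k matrix with orthonormal columns whose columns span the column space of A, let S be a real d×m matrix with rank(SA) = k, and let M be a real n×k matrix such that SAM has orthonormal columns. Suppose furthermore that S is an ε-subspace embedding for the column space of A for some 0 ≤ ε < 1, i.e., (1−ε)‖y‖₂ ≤ ‖Sy‖₂ ≤ (1+ε)‖y‖₂ for every vector y in the column space of A. Then every singular value σ of AM satisfies 1/(1+ε) ≤ σ ≤ 1/(1−ε); in particular cond(AM) ≤ (1+ε)/(1−ε). -/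
open Matrix

/-- The Euclidean (ℓ₂) norm of a vector in `Fin p → ℝ`. -/
noncomputable def l2norm {p : ℕ} (v : Fin p → ℝ) : ℝ := Real.sqrt (∑ i, v i ^ 2)

lemma dot_gram {p q : ℕ} (C : Matrix (Fin p) (Fin q) ℝ) (v : Fin q → ℝ) :
    v ⬝ᵥ ((Cᵀ * C) *ᵥ v) = ∑ i, (C *ᵥ v) i ^ 2 := by
  rw [← Matrix.mulVec_mulVec, Matrix.dotProduct_mulVec, Matrix.vecMul_transpose]
  simp [dotProduct, sq]

/-- If moreover `S` is an `ε`-subspace embedding for the column space of `A`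
(with `0 ≤ ε < 1`), then every singular value `σ` of `A * M` satisfies
`1/(1+ε) ≤ σ ≤ 1/(1−ε)`; in particular `cond (A * M) ≤ (1+ε)/(1−ε)`. -/
theorem singular_values_of_preconditioned_of_embedding {m n d k : ℕ}
    (ε : ℝ) (hε0 : 0 ≤ ε) (hε1 : ε < 1)
    (A : Matrix (Fin m) (Fin n) ℝ) (hA : A.rank = k)
    (U : Matrix (Fin m) (Fin k) ℝ) (hU : Uᵀ * U = 1)
    (hspan : LinearMap.range A.mulVecLin = LinearMap.range U.mulVecLin)
    (S : Matrix (Fin d) (Fin m) ℝ) (hSA : (S * A).rank = k)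
    (M : Matrix (Fin n) (Fin k) ℝ) (hM : (S * A * M)ᵀ * (S * A * M) = 1)
    (hemb : ∀ y ∈ LinearMap.range A.mulVecLin,
      (1 - ε) * l2norm y ≤ l2norm (S.mulVec y) ∧ l2norm (S.mulVec y) ≤ (1 + ε) * l2norm y)
    (hAM : ((A * M)ᵀ * (A * M)).IsHermitian) :
    (∀ i, 1 / (1 + ε) ≤ Real.sqrt (hAM.eigenvalues i) ∧
        Real.sqrt (hAM.eigenvalues i) ≤ 1 / (1 - ε)) ∧
      (⨆ i, Real.sqrt (hAM.eigenvalues i)) / (⨅ i, Real.sqrt (hAM.eigenvalues i)) ≤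
        (1 + ε) / (1 - ε) := by
  have hε1' : 0 < 1 - ε := by linarith
  have hε0' : 0 < 1 + ε := by linarith
  have H : ∀ i, 1 / (1 + ε) ≤ Real.sqrt (hAM.eigenvalues i) ∧
      Real.sqrt (hAM.eigenvalues i) ≤ 1 / (1 - ε) := by
    intro i
    set v : Fin k → ℝ := ⇑(hAM.eigenvectorBasis i) with hvdef
    have hv1 : ∑ j, v j ^ 2 = 1 := by
      have h := hAM.eigenvectorBasis.orthonormal.1 i
      have h2 : ‖hAM.eigenvectorBasis i‖ = Real.sqrt (∑ j, v j ^ 2) := by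
        rw [EuclideanSpace.norm_eq]
        simp [hvdef, Real.norm_eq_abs, sq_abs]
      rw [h2] at h
      have := congrArg (· ^ 2) h
      simpa [Real.sq_sqrt (Finset.sum_nonneg fun j _ => sq_nonneg (v j))] using this
    have hev : ((A * M)ᵀ * (A * M)) *ᵥ v = hAM.eigenvalues i • v :=
      hAM.mulVec_eigenvectorBasis i
    have hvv : v ⬝ᵥ v = 1 := by
      simpa [dotProduct, sq] using hv1
    have hlam : hAM.eigenvalues i = ∑ j, ((A * M) *ᵥ v) j ^ 2 := by
      have h2 : v ⬝ᵥ (((A * M)ᵀ * (A * M)) *ᵥ v) = hAM.eigenvalues i := by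
        rw [hev, dotProduct_smul, hvv, smul_eq_mul, mul_one]
      rw [← h2, dot_gram]
    set y : Fin m → ℝ := (A * M) *ᵥ v with hydef
    have hymem : y ∈ LinearMap.range A.mulVecLin := by
      refine ⟨M *ᵥ v, ?_⟩
      simp [hydef, Matrix.mulVecLin_apply, Matrix.mulVec_mulVec]
    have hSy : S *ᵥ y = (S * A * M) *ᵥ v := by
      simp [hydef, Matrix.mulVec_mulVec, Matrix.mul_assoc]
    have hSy1 : l2norm (S *ᵥ y) = 1 := by
      have hg := dot_gram (S * A * M) v
      rw [hM] at hg
      have h1 : v ⬝ᵥ ((1 : Matrix (Fin k) (Fin k) ℝ) *ᵥ v) = 1 := by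
        simp [Matrix.one_mulVec, dotProduct, sq] at hv1 ⊢
        simpa [sq] using hv1
      rw [h1] at hg
      rw [l2norm, hSy, ← hg, Real.sqrt_one]
    have hsqrt : Real.sqrt (hAM.eigenvalues i) = l2norm y := by
      rw [hlam]; rfl
    obtain ⟨hlo, hhi⟩ := hemb y hymem
    rw [hSy1] at hlo hhi
    constructor
    · rw [hsqrt]
      rw [div_le_iff₀ hε0']
      linarith
    · rw [hsqrt]
      rw [le_div_iff₀ hε1']
      linarith
  refine ⟨H, ?_⟩
  rcases Nat.eq_zero_or_pos k with hk | hk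
  · subst hk
    haveI : IsEmpty (Fin 0) := inferInstance
    rw [Real.iSup_of_isEmpty, Real.iInf_of_isEmpty]
    rw [zero_div]
    positivity
  · haveI : Nonempty (Fin k) := ⟨⟨0, hk⟩⟩
    have hsup : (⨆ i, Real.sqrt (hAM.eigenvalues i)) ≤ 1 / (1 - ε) :=
      ciSup_le fun i => (H i).2
    have hinf : 1 / (1 + ε) ≤ ⨅ i, Real.sqrt (hAM.eigenvalues i) :=
      le_ciInf fun i => (H i).1
    have h := div_le_div₀ (by positivity) hsup (by positivity) hinf
    calc _ ≤ (1 / (1 - ε)) / (1 / (1 + ε)) := h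
      _ = (1 + ε) / (1 - ε) := by field_simp
end

section
/- Let A be a real m×n matrix, M a real n×k matrix with rank(AM) = rank(A), and b ∈ ℝ^m. If z̃ ∈ ℝ^k satisfies ‖AMz̃ − b‖₂ ≤ ‖AMz − b‖₂ for all z ∈ ℝ^k, then x̃ = Mz̃ satisfies ‖Ax̃ − b‖₂ ≤ ‖Ax − b‖₂ for all x ∈ ℝⁿ; that is, any minimizer of the right-preconditioned least squares problem, mapped through M, is a minimizer of the original least squares problem min_x ‖Ax − b‖₂². -/
open Matrix

/-- If `rank (A * M) = rank A`, then any minimizer `z̃` of the right-preconditioned least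
squares problem `min_z ‖A M z − b‖₂`, mapped through `M`, yields a minimizer `x̃ = M z̃`
of the original least squares problem `min_x ‖A x − b‖₂`. -/
theorem preconditioned_minimizer_solves_original {m n k : ℕ}
    (A : Matrix (Fin m) (Fin n) ℝ) (M : Matrix (Fin n) (Fin k) ℝ)
    (hrank : (A * M).rank = A.rank) (b : Fin m → ℝ) (ztilde : Fin k → ℝ)
    (hzt : ∀ z : Fin k → ℝ,
      l2norm ((A * M).mulVec ztilde - b) ≤ l2norm ((A * M).mulVec z - b)) :
    ∀ x : Fin n → ℝ,
      l2norm (A.mulVec (M.mulVec ztilde) - b) ≤ l2norm (A.mulVec x - b) := by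
  intro x
  have hle : LinearMap.range (A * M).mulVecLin ≤ LinearMap.range A.mulVecLin := by
    rintro _ ⟨z, rfl⟩
    exact ⟨M.mulVec z, by simp [mulVecLin_apply, mulVec_mulVec]⟩
  have heq : LinearMap.range (A * M).mulVecLin = LinearMap.range A.mulVecLin :=
    Submodule.eq_of_le_of_finrank_eq hle hrank
  have hx : A.mulVec x ∈ LinearMap.range (A * M).mulVecLin := by
    rw [heq]; exact ⟨x, rfl⟩
  obtain ⟨z, hz⟩ := hx
  have h := hzt z
  rw [show (A * M).mulVec z = A.mulVec x from hz] at h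
  rw [show A.mulVec (M.mulVec ztilde) = (A * M).mulVec ztilde by
    rw [← mulVec_mulVec]]
  exact h
end
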